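/- If m is a starter with squarefull part s > 1, then the largest prime factor of α(m) is strictly less than the largest prime factor of s. -/

import Mathlib

open Pointwise

/-- The set of all subset sums of `{φ(d) : d ∣ n}`. -/
def SubsetSums (n : ℕ) : Set ℕ :=
  {k | ∃ D : Finset ℕ, D ⊆ n.divisors ∧ k = ∑ d ∈ D, Nat.totient d}

/-- `n` is `φ`-practical if every integer in `{0, 1, ..., n}` is a subset sum of
the totients of the divisors of `n`. -/
def PhiPractical (n : ℕ) : Prop := 0 < n ∧ SubsetSums n = Set.Iic n

/-- The largest prime factor of `n` (junk value `0` if `n ≤ 1`). -/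
def Pplus (n : ℕ) : ℕ := n.primeFactors.sup id

/-- `d` is an initial divisor of `n`: `d ∣ n` and every prime factor of `d` is
smaller than every prime factor of `n / d`. -/
def InitialDivisor (d n : ℕ) : Prop :=
  d ∣ n ∧ ∀ p ∈ d.primeFactors, ∀ q ∈ (n / d).primeFactors, p < q

/-- A positive integer is squarefull if `p² ∣ s` for every prime `p ∣ s`. -/
def IsSquarefull (s : ℕ) : Prop := ∀ p : ℕ, p.Prime → p ∣ s → p ^ 2 ∣ s

/-- `s` is the squarefull part of `m`: the largest squarefull divisor of `m`. -/
def IsSquarefullPart (s m : ℕ) : Prop :=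
  s ∣ m ∧ IsSquarefull s ∧ ∀ t, t ∣ m → IsSquarefull t → t ≤ s

/-- A starter is a `φ`-practical `m` such that either `m / P⁺(m)` is not
`φ`-practical or `P⁺(m)² ∣ m`. -/
def Starter (m : ℕ) : Prop :=
  PhiPractical m ∧ (¬ PhiPractical (m / Pplus m) ∨ Pplus m ^ 2 ∣ m)

/-- `a = α(m)`: the largest proper initial divisor of `m` that is `φ`-practical. -/
def IsAlpha (a m : ℕ) : Prop :=
  InitialDivisor a m ∧ a < m ∧ PhiPractical a ∧
    ∀ d, InitialDivisor d m → d < m → PhiPractical d → d ≤ a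

/-! Write `b = m / α(m)` and `q = P⁺(s)`. If `q ∣ b`, every prime of the initial divisor `α(m)`
is below `q`. Otherwise `q ∣ α(m)`, and then all of `s` divides `α(m)`, since a prime of `s`
dividing `b` would exceed `q`. Let `r = P⁻(b)`. Because `m` is `φ`-practical, `α(m) + 1` is a subset
sum of totients of divisors of `m`, which forces `r ≤ α(m) + 2`; then `α(m) r` is `φ`-practical
(represent `k ≤ α(m) r` as `A + (r - 1) B` with `A, B ≤ α(m)`). If `r² ∤ b`, `α(m) r` is an
initial divisor of `m`, contradicting either the maximality of `α(m)` or, when `α(m) r = m`, that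
`m` is a starter. Hence `r² ∣ b`, and `s r²` is a squarefull divisor of `m` larger than `s`. -/

theorem subsetSums_subset_Iic (n : ℕ) : SubsetSums n ⊆ Set.Iic n := by
  rintro k ⟨D, hD, rfl⟩
  calc ∑ d ∈ D, Nat.totient d ≤ ∑ d ∈ n.divisors, Nat.totient d := Finset.sum_le_sum_of_subset hD
    _ = n := Nat.sum_totient n

theorem PhiPractical.minFac_div_le {m a : ℕ} (hm : PhiPractical m) (ha : a ∣ m) (ham : a < m) :
    (m / a).minFac ≤ a + 2 := by
  obtain ⟨D, hD, hsum⟩ : a + 1 ∈ SubsetSums m := hm.2 ▸ ham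
  have ha0 : a ≠ 0 := ne_zero_of_dvd_ne_zero hm.1.ne' ha
  -- Some `e ∈ D` does not divide `a`, for otherwise the sum would be at most `a`.
  obtain ⟨e, heD, hea⟩ : ∃ e ∈ D, ¬ e ∣ a := by
    by_contra! hall
    have : a + 1 ∈ SubsetSums a :=
      ⟨D, fun e he => Nat.mem_divisors.2 ⟨hall e he, ha0⟩, hsum⟩
    exact absurd (subsetSums_subset_Iic a this) (by simp)
  have hem : e ∣ a * (m / a) := (Nat.mul_div_cancel' ha).symm ▸ (Nat.mem_divisors.1 (hD heD)).1
  obtain ⟨t, ht, hte, htb⟩ := Nat.Prime.not_coprime_iff_dvd.mp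
    fun hco : e.Coprime (m / a) => hea (hco.dvd_of_dvd_mul_right hem)
  have hφ : t - 1 ≤ Nat.totient e := by
    rw [← Nat.totient_prime ht]
    have he0 : 0 < e := Nat.pos_of_dvd_of_pos (Nat.mem_divisors.1 (hD heD)).1 hm.1
    exact Nat.le_of_dvd (Nat.totient_pos.2 he0) (Nat.totient_dvd_of_dvd hte)
  have hφa : Nat.totient e ≤ a + 1 := hsum ▸ Finset.single_le_sum (fun _ _ => Nat.zero_le _) heD
  have := Nat.minFac_le_of_dvd ht.two_le htb
  omega

theorem exists_add_mul_eq_of_le {a c k : ℕ} (hc : c ≤ a + 1) (hk : k ≤ a * (c + 1)) :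
    ∃ A ≤ a, ∃ B ≤ a, k = A + c * B := by
  rcases le_or_gt k (c * a) with h | h
  · refine ⟨k % c, ?_, k / c, Nat.div_le_of_le_mul h, (Nat.mod_add_div k c).symm⟩
    rcases c.eq_zero_or_pos with rfl | hc0
    · simp_all
    · have := Nat.mod_lt k hc0
      omega
  · exact ⟨k - c * a, by rw [mul_add, mul_one, mul_comm] at hk; omega, a, le_rfl, by omega⟩

theorem add_mul_mem_subsetSums_mul_prime {a r A B : ℕ} (hr : r.Prime) (hra : ¬ r ∣ a)
    (hA : A ∈ SubsetSums a) (hB : B ∈ SubsetSums a) : A + (r - 1) * B ∈ SubsetSums (a * r) := by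
  classical
  obtain ⟨DA, hDA, rfl⟩ := hA
  obtain ⟨DB, hDB, rfl⟩ := hB
  have hdiv {d : ℕ} (hd : d ∈ a.divisors) (x : ℕ) (hx : x ∣ d * r) : x ∈ (a * r).divisors :=
    Nat.mem_divisors.2 ⟨hx.trans (mul_dvd_mul_right (Nat.mem_divisors.1 hd).1 r),
      mul_ne_zero (Nat.mem_divisors.1 hd).2 hr.ne_zero⟩
  have hdisj : Disjoint DA (DB.image (r * ·)) := by
    refine Finset.disjoint_left.2 fun x hxA hxB => ?_
    obtain ⟨d, -, rfl⟩ := Finset.mem_image.1 hxB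
    exact hra ((dvd_mul_right r d).trans (Nat.mem_divisors.1 (hDA hxA)).1)
  have hφ : ∀ d ∈ DB, Nat.totient (r * d) = (r - 1) * Nat.totient d := fun d hd => by
    have hrd : r.Coprime d :=
      (hr.coprime_iff_not_dvd).2 fun h => hra (h.trans (Nat.mem_divisors.1 (hDB hd)).1)
    rw [Nat.totient_mul hrd, Nat.totient_prime hr]
  refine ⟨DA ∪ DB.image (r * ·),
    Finset.union_subset (fun x hx => hdiv (hDA hx) x (dvd_mul_right x r)) fun x hx => ?_, ?_⟩
  · obtain ⟨d, hd, rfl⟩ := Finset.mem_image.1 hx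
    exact hdiv (hDB hd) _ (by rw [mul_comm])
  · rw [Finset.sum_union hdisj,
      Finset.sum_image fun x _ y _ h => Nat.eq_of_mul_eq_mul_left hr.pos h,
      Finset.mul_sum, Finset.sum_congr rfl hφ]

theorem PhiPractical.mul_prime {a r : ℕ} (ha : PhiPractical a) (hr : r.Prime) (hra : ¬ r ∣ a)
    (hle : r ≤ a + 2) : PhiPractical (a * r) := by
  refine ⟨Nat.mul_pos ha.1 hr.pos, (subsetSums_subset_Iic _).antisymm fun k hk => ?_⟩
  obtain ⟨A, hA, B, hB, rfl⟩ := exists_add_mul_eq_of_le (a := a) (c := r - 1) (k := k) (by omega)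
    (by rw [Nat.sub_add_cancel hr.one_le]; exact hk)
  exact add_mul_mem_subsetSums_mul_prime hr hra (ha.2 ▸ hA) (ha.2 ▸ hB)

theorem Nat.div_ne_zero_of_dvd {a m : ℕ} (ha : a ∣ m) (hm : m ≠ 0) : m / a ≠ 0 :=
  (Nat.div_ne_zero_iff_of_dvd ha).2 ⟨hm, ne_zero_of_dvd_ne_zero hm ha⟩

theorem le_pplus {p n : ℕ} (hp : p ∈ n.primeFactors) : p ≤ Pplus n :=
  Finset.le_sup (f := id) hp

theorem pplus_mem_primeFactors {n : ℕ} (hn : 1 < n) : Pplus n ∈ n.primeFactors := by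
  obtain ⟨p, hp, hsup⟩ := Finset.exists_mem_eq_sup _ (Nat.nonempty_primeFactors.2 hn) id
  rwa [Pplus, hsup]

theorem Nat.Prime.pplus_eq {p : ℕ} (hp : p.Prime) : Pplus p = p := by
  simp [Pplus, hp.primeFactors]

theorem IsSquarefull.mul {s t : ℕ} (hs : IsSquarefull s) (ht : IsSquarefull t) :
    IsSquarefull (s * t) := fun p hp hpst =>
  (hp.dvd_mul.1 hpst).elim (fun h => (hs p hp h).mul_right t) (fun h => (ht p hp h).mul_left s)

theorem isSquarefull_sq (n : ℕ) : IsSquarefull (n ^ 2) := fun _ hp h =>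
  pow_dvd_pow_of_dvd (hp.dvd_of_dvd_pow h) 2

theorem IsSquarefullPart.not_mul_sq_dvd {s m n : ℕ} (hs : IsSquarefullPart s m) (hm : m ≠ 0)
    (hn : 1 < n) : ¬ s * n ^ 2 ∣ m := fun h => by
  have hle := hs.2.2 _ h (hs.2.1.mul (isSquarefull_sq n))
  have hs0 := Nat.pos_of_dvd_of_pos hs.1 (Nat.pos_of_ne_zero hm)
  have hn2 : 2 ^ 2 ≤ n ^ 2 := Nat.pow_le_pow_left hn 2
  nlinarith

namespace InitialDivisor

variable {a m : ℕ}

theorem pplus_eq (ha : InitialDivisor a m) (hm : m ≠ 0) (hb : m / a ≠ 1) :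
    Pplus m = Pplus (m / a) := by
  have ha0 : a ≠ 0 := ne_zero_of_dvd_ne_zero hm ha.1
  have hb0 := Nat.div_ne_zero_of_dvd ha.1 hm
  refine le_antisymm (Finset.sup_le fun p hp => ?_)
    (Finset.sup_mono (Nat.primeFactors_mono (Nat.div_dvd_of_dvd ha.1) hm))
  obtain ⟨hp, hpm, -⟩ := Nat.mem_primeFactors.1 hp
  rw [← Nat.mul_div_cancel' ha.1] at hpm
  rcases hp.dvd_mul.1 hpm with hpa | hpb
  · exact (ha.2 p (Nat.mem_primeFactors.2 ⟨hp, hpa, ha0⟩) _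
      (pplus_mem_primeFactors (Nat.one_lt_iff_ne_zero_and_ne_one.2 ⟨hb0, hb⟩))).le
  · exact le_pplus (Nat.mem_primeFactors.2 ⟨hp, hpb, hb0⟩)

theorem dvd_of_pplus_dvd (ha : InitialDivisor a m) (hm : m ≠ 0) {s : ℕ} (hsm : s ∣ m)
    (hs : 1 < s) (hq : Pplus s ∣ a) : s ∣ a := by
  have hqs := pplus_mem_primeFactors hs
  have hqa : Pplus s ∈ a.primeFactors :=
    Nat.mem_primeFactors.2 ⟨Nat.prime_of_mem_primeFactors hqs, hq, ne_zero_of_dvd_ne_zero hm ha.1⟩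
  have hsb : s.Coprime (m / a) := Nat.coprime_of_dvd fun t ht hts htb =>
    (le_pplus (Nat.mem_primeFactors.2 ⟨ht, hts, by omega⟩)).not_gt
      (ha.2 _ hqa t (Nat.mem_primeFactors.2 ⟨ht, htb, Nat.div_ne_zero_of_dvd ha.1 hm⟩))
  exact hsb.dvd_of_dvd_mul_right (by rwa [Nat.mul_div_cancel' ha.1])

theorem mul_minFac (ha : InitialDivisor a m) (hr : ¬ (m / a).minFac ^ 2 ∣ m / a) :
    InitialDivisor (a * (m / a).minFac) m := by
  set r := (m / a).minFac
  have hrb : r ∣ m / a := Nat.minFac_dvd _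
  refine ⟨(Nat.mul_div_cancel' ha.1) ▸ mul_dvd_mul_left a hrb, fun p hp t ht => ?_⟩
  rw [← Nat.div_div_eq_div_mul] at ht
  obtain ⟨htP, htd, htne⟩ := Nat.mem_primeFactors.1 ht
  have htb : t ∣ m / a := htd.trans (Nat.div_dvd_of_dvd hrb)
  have hrt : r < t := by
    refine (Nat.minFac_le_of_dvd htP.two_le htb).lt_of_ne fun hrt => hr ?_
    have hrr : r ∣ m / a / r := by convert htd using 1
    rw [sq, ← Nat.div_mul_cancel hrb]
    exact mul_dvd_mul_right hrr r
  obtain ⟨hpP, hpd, hpne⟩ := Nat.mem_primeFactors.1 hp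
  rcases hpP.dvd_mul.1 hpd with hpa | hpr
  · exact ha.2 p (Nat.mem_primeFactors.2 ⟨hpP, hpa, left_ne_zero_of_mul hpne⟩) t
      (Nat.mem_primeFactors.2 ⟨htP, htb, fun h => by simp [h] at htne⟩)
  · exact (Nat.le_of_dvd (Nat.minFac_pos _) hpr).trans_lt hrt

end InitialDivisor

namespace IsAlpha

variable {a m : ℕ}

theorem one_lt_div (ha : IsAlpha a m) : 1 < m / a := by
  obtain ⟨⟨⟨k, rfl⟩, -⟩, hak, ⟨ha0, -⟩, -⟩ := ha
  rw [Nat.mul_div_cancel_left k ha0]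
  by_contra! hk
  nlinarith

theorem minFac_sq_dvd (hm : Starter m) (ha : IsAlpha a m) : (m / a).minFac ^ 2 ∣ m / a := by
  have hb := ha.one_lt_div
  obtain ⟨haI, ham, haP, hmax⟩ := ha
  by_contra hr2
  set r := (m / a).minFac
  have hm0 : m ≠ 0 := hm.1.1.ne'
  have hr : r.Prime := Nat.minFac_prime hb.ne'
  have hrb : r ∈ (m / a).primeFactors :=
    Nat.mem_primeFactors.2 ⟨hr, Nat.minFac_dvd _, Nat.div_ne_zero_of_dvd haI.1 hm0⟩
  have hra : ¬ r ∣ a := fun h => (haI.2 r (Nat.mem_primeFactors.2 ⟨hr, h, haP.1.ne'⟩) r hrb).false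
  have harP : PhiPractical (a * r) := haP.mul_prime hr hra (hm.1.minFac_div_le haI.1 ham)
  have harI : InitialDivisor (a * r) m := haI.mul_minFac hr2
  rcases (Nat.le_of_dvd hm.1.1 harI.1).lt_or_eq with harm | harm
  · have := hmax _ harI harm harP
    nlinarith [hr.two_le, haP.1]
  · have hPm : Pplus m = r := by
      rw [haI.pplus_eq hm0 hb.ne', ← harm, Nat.mul_div_cancel_left _ haP.1, hr.pplus_eq]
    rcases hm.2 with hns | hsq
    · rw [hPm, ← harm, Nat.mul_div_cancel _ hr.pos] at hns
      exact hns haP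
    · rw [hPm, ← harm, sq, mul_comm a] at hsq
      exact hra (Nat.dvd_of_mul_dvd_mul_left hr.pos hsq)

end IsAlpha

theorem pplus_alpha_lt_pplus_squarefull_part (m s a : ℕ) (hm : Starter m)
    (hs : IsSquarefullPart s m) (hs1 : 1 < s) (ha : IsAlpha a m) :
    Pplus a < Pplus s := by
  have hm0 : m ≠ 0 := hm.1.1.ne'
  have hmab : a * (m / a) = m := Nat.mul_div_cancel' ha.1.1
  have hq := pplus_mem_primeFactors hs1
  have hqP := Nat.prime_of_mem_primeFactors hq
  have hqb : Pplus s ∣ m / a := by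
    by_contra hqb
    have hqab : Pplus s ∣ a * (m / a) :=
      (Nat.dvd_of_mem_primeFactors hq).trans (hs.1.trans (dvd_of_eq hmab.symm))
    have hsa : s ∣ a :=
      ha.1.dvd_of_pplus_dvd hm0 hs.1 hs1 ((hqP.dvd_mul.1 hqab).resolve_right hqb)
    exact hs.not_mul_sq_dvd hm0 (Nat.minFac_prime ha.one_lt_div.ne').one_lt
      ((mul_dvd_mul hsa (ha.minFac_sq_dvd hm)).trans (dvd_of_eq hmab))
  exact (Finset.sup_lt_iff hqP.pos).2 fun p hp =>
    ha.1.2 p hp _ (Nat.mem_primeFactors.2 ⟨hqP, hqb, Nat.div_ne_zero_of_dvd ha.1.1 hm0⟩)
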